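/- For the Jacobian ternary bracket on ℝ³, fixing the last argument yields a Poisson bracket: for any fixed smooth function h, the binary bracket {f,g}_h := {f,g,h} is skew-symmetric, satisfies the Leibniz rule in each argument, and satisfies the Jacobi identity. -/

import Mathlib

noncomputable section

/-- Partial derivative of `f : ℝ³ → ℝ` in the `i`-th coordinate direction. -/
def pd (i : Fin 3) (f : (Fin 3 → ℝ) → ℝ) (x : Fin 3 → ℝ) : ℝ :=
  fderiv ℝ f x (Pi.single i 1)

lemma pd_contDiff {f : (Fin 3 → ℝ) → ℝ} (hf : ContDiff ℝ (⊤ : ℕ∞) f) (i : Fin 3) :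
    ContDiff ℝ (⊤:ℕ∞) (pd i f) := by
  have h1 : ContDiff ℝ (⊤:ℕ∞) f := hf.of_le (by simp)
  exact (contDiff_infty_iff_fderiv.mp h1).2.clm_apply contDiff_const

lemma pd_mul {f g : (Fin 3 → ℝ) → ℝ} {x} (i : Fin 3) (hf : DifferentiableAt ℝ f x)
    (hg : DifferentiableAt ℝ g x) :
    pd i (fun y => f y * g y) x = f x * pd i g x + g x * pd i f x := by
  simp [pd, fderiv_fun_mul hf hg]

lemma pd_add {f g : (Fin 3 → ℝ) → ℝ} {x} (i : Fin 3) (hf : DifferentiableAt ℝ f x)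
    (hg : DifferentiableAt ℝ g x) :
    pd i (fun y => f y + g y) x = pd i f x + pd i g x := by
  simp [pd, fderiv_fun_add hf hg]

lemma pd_sub {f g : (Fin 3 → ℝ) → ℝ} {x} (i : Fin 3) (hf : DifferentiableAt ℝ f x)
    (hg : DifferentiableAt ℝ g x) :
    pd i (fun y => f y - g y) x = pd i f x - pd i g x := by
  simp [pd, fderiv_fun_sub hf hg]

lemma pd_comm {f : (Fin 3 → ℝ) → ℝ} (hf : ContDiff ℝ (⊤ : ℕ∞) f) (i j : Fin 3) (x) :
    pd i (pd j f) x = pd j (pd i f) x := by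
  have h2 : IsSymmSndFDerivAt ℝ f x := (hf.contDiffAt).isSymmSndFDerivAt (by rw [minSmoothness_of_isRCLikeNormedField]; exact WithTop.coe_le_coe.mpr (le_top : (2:ℕ∞) ≤ ⊤))
  have h1 : ContDiff ℝ (⊤:ℕ∞) f := hf.of_le (by simp)
  have hd : Differentiable ℝ (fderiv ℝ f) :=
    (contDiff_infty_iff_fderiv.mp h1).2.differentiable (by simp)
  have key : ∀ a b : Fin 3, pd a (pd b f) x =
      fderiv ℝ (fderiv ℝ f) x (Pi.single a 1) (Pi.single b 1) := by
    intro a b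
    have : pd b f = fun y => (fderiv ℝ f y) (Pi.single b 1) := rfl
    rw [pd, this, fderiv_clm_apply (hd x) (differentiableAt_const _)]
    simp
  rw [key, key, h2]


/-- The ternary Nambu bracket {f,g,h} = det(∂(f,g,h)/∂(x,y,z)) on ℝ³. -/
def nb (f g h : (Fin 3 → ℝ) → ℝ) : (Fin 3 → ℝ) → ℝ :=
  fun x => Matrix.det !![pd 0 f x, pd 1 f x, pd 2 f x;
                         pd 0 g x, pd 1 g x, pd 2 g x;
                         pd 0 h x, pd 1 h x, pd 2 h x]

lemma pd_mul3 {a b c : (Fin 3 → ℝ) → ℝ} {x} (i : Fin 3) (ha : DifferentiableAt ℝ a x)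
    (hb : DifferentiableAt ℝ b x) (hc : DifferentiableAt ℝ c x) :
    pd i (fun y => a y * b y * c y) x =
      pd i a x * b x * c x + a x * pd i b x * c x + a x * b x * pd i c x := by
  rw [pd_mul i (ha.fun_mul hb) hc, pd_mul i ha hb]; ring

lemma nb_eq (f g h : (Fin 3 → ℝ) → ℝ) :
    nb f g h = fun y => pd 0 f y * pd 1 g y * pd 2 h y - pd 0 f y * pd 2 g y * pd 1 h y - pd 1 f y * pd 0 g y * pd 2 h y + pd 1 f y * pd 2 g y * pd 0 h y + pd 2 f y * pd 0 g y * pd 1 h y - pd 2 f y * pd 1 g y * pd 0 h y := by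
  funext y; simp [nb, Matrix.det_fin_three]

lemma pd_nb {f g h : (Fin 3 → ℝ) → ℝ} (hf : ContDiff ℝ (⊤ : ℕ∞) f) (hg : ContDiff ℝ (⊤ : ℕ∞) g)
    (hh : ContDiff ℝ (⊤ : ℕ∞) h) (i : Fin 3) (x : Fin 3 → ℝ) :
    pd i (nb f g h) x =
      pd i (pd 0 f) x * pd 1 g x * pd 2 h x + pd 0 f x * pd i (pd 1 g) x * pd 2 h x + pd 0 f x * pd 1 g x * pd i (pd 2 h) x - pd i (pd 0 f) x * pd 2 g x * pd 1 h x - pd 0 f x * pd i (pd 2 g) x * pd 1 h x - pd 0 f x * pd 2 g x * pd i (pd 1 h) x - pd i (pd 1 f) x * pd 0 g x * pd 2 h x - pd 1 f x * pd i (pd 0 g) x * pd 2 h x - pd 1 f x * pd 0 g x * pd i (pd 2 h) x + pd i (pd 1 f) x * pd 2 g x * pd 0 h x + pd 1 f x * pd i (pd 2 g) x * pd 0 h x + pd 1 f x * pd 2 g x * pd i (pd 0 h) x + pd i (pd 2 f) x * pd 0 g x * pd 1 h x + pd 2 f x * pd i (pd 0 g) x * pd 1 h x + pd 2 f x * pd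 0 g x * pd i (pd 1 h) x - pd i (pd 2 f) x * pd 1 g x * pd 0 h x - pd 2 f x * pd i (pd 1 g) x * pd 0 h x - pd 2 f x * pd 1 g x * pd i (pd 0 h) x := by
  have df : ∀ j : Fin 3, Differentiable ℝ (pd j f) :=
    fun j => (pd_contDiff hf j).differentiable (by simp)
  have dg : ∀ j : Fin 3, Differentiable ℝ (pd j g) :=
    fun j => (pd_contDiff hg j).differentiable (by simp)
  have dh : ∀ j : Fin 3, Differentiable ℝ (pd j h) :=
    fun j => (pd_contDiff hh j).differentiable (by simp)
  rw [nb_eq]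
  have d1 : DifferentiableAt ℝ (fun y => pd 0 f y * pd 1 g y * pd 2 h y) x := by fun_prop
  have d2 : DifferentiableAt ℝ (fun y => pd 0 f y * pd 2 g y * pd 1 h y) x := by fun_prop
  have d3 : DifferentiableAt ℝ (fun y => pd 1 f y * pd 0 g y * pd 2 h y) x := by fun_prop
  have d4 : DifferentiableAt ℝ (fun y => pd 1 f y * pd 2 g y * pd 0 h y) x := by fun_prop
  have d5 : DifferentiableAt ℝ (fun y => pd 2 f y * pd 0 g y * pd 1 h y) x := by fun_prop
  have d6 : DifferentiableAt ℝ (fun y => pd 2 f y * pd 1 g y * pd 0 h y) x := by fun_prop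
  rw [pd_sub i ((((d1.fun_sub d2).fun_sub d3).fun_add d4).fun_add d5) d6,
      pd_add i (((d1.fun_sub d2).fun_sub d3).fun_add d4) d5,
      pd_add i ((d1.fun_sub d2).fun_sub d3) d4,
      pd_sub i (d1.fun_sub d2) d3,
      pd_sub i d1 d2]
  rw [pd_mul3 i (df 0).differentiableAt (dg 1).differentiableAt (dh 2).differentiableAt,
      pd_mul3 i (df 0).differentiableAt (dg 2).differentiableAt (dh 1).differentiableAt,
      pd_mul3 i (df 1).differentiableAt (dg 0).differentiableAt (dh 2).differentiableAt,
      pd_mul3 i (df 1).differentiableAt (dg 2).differentiableAt (dh 0).differentiableAt,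
      pd_mul3 i (df 2).differentiableAt (dg 0).differentiableAt (dh 1).differentiableAt,
      pd_mul3 i (df 2).differentiableAt (dg 1).differentiableAt (dh 0).differentiableAt]
  ring

lemma nb_apply (f g h : (Fin 3 → ℝ) → ℝ) (x : Fin 3 → ℝ) :
    nb f g h x = pd 0 f x * pd 1 g x * pd 2 h x - pd 0 f x * pd 2 g x * pd 1 h x
      - pd 1 f x * pd 0 g x * pd 2 h x + pd 1 f x * pd 2 g x * pd 0 h x
      + pd 2 f x * pd 0 g x * pd 1 h x - pd 2 f x * pd 1 g x * pd 0 h x := by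
  simp [nb, Matrix.det_fin_three]

/-- For fixed h, the binary bracket {f,g}_h := {f,g,h}. -/
def bh (h f g : (Fin 3 → ℝ) → ℝ) : (Fin 3 → ℝ) → ℝ := nb f g h

/-- Fixing the last argument of the Jacobian ternary bracket yields a Poisson bracket. -/
theorem fixed_arg_poisson :
    ∀ h : (Fin 3 → ℝ) → ℝ, ContDiff ℝ (⊤ : ℕ∞) h →
      ∀ f g k : (Fin 3 → ℝ) → ℝ, ContDiff ℝ (⊤ : ℕ∞) f → ContDiff ℝ (⊤ : ℕ∞) g → ContDiff ℝ (⊤ : ℕ∞) k →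
      (∀ x, bh h f g x = - bh h g f x) ∧
      (∀ x, bh h (fun y => f y * g y) k x = f x * bh h g k x + g x * bh h f k x) ∧
      (∀ x, bh h f (fun y => g y * k y) x = g x * bh h f k x + k x * bh h f g x) ∧
      (∀ x, bh h f (bh h g k) x + bh h g (bh h k f) x + bh h k (bh h f g) x = 0) := by
  intro h hh f g k hf hg hk
  have hfx : ∀ x, DifferentiableAt ℝ f x :=
    fun x => (hf.differentiable (by simp)).differentiableAt
  have hgx : ∀ x, DifferentiableAt ℝ g x :=
    fun x => (hg.differentiable (by simp)).differentiableAt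
  have hkx : ∀ x, DifferentiableAt ℝ k x :=
    fun x => (hk.differentiable (by simp)).differentiableAt
  refine ⟨fun x => ?_, fun x => ?_, fun x => ?_, fun x => ?_⟩
  · simp only [bh, nb_apply]; ring
  · simp only [bh, nb_apply]
    rw [pd_mul 0 (hfx x) (hgx x), pd_mul 1 (hfx x) (hgx x), pd_mul 2 (hfx x) (hgx x)]
    ring
  · simp only [bh, nb_apply]
    rw [pd_mul 0 (hgx x) (hkx x), pd_mul 1 (hgx x) (hkx x), pd_mul 2 (hgx x) (hkx x)]
    ring
  · simp only [bh, nb_apply]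
    rw [pd_nb hg hk hh 0 x, pd_nb hg hk hh 1 x, pd_nb hg hk hh 2 x,
        pd_nb hk hf hh 0 x, pd_nb hk hf hh 1 x, pd_nb hk hf hh 2 x,
        pd_nb hf hg hh 0 x, pd_nb hf hg hh 1 x, pd_nb hf hg hh 2 x]
    simp only [pd_comm hf 1 0, pd_comm hf 2 0, pd_comm hf 2 1,
               pd_comm hg 1 0, pd_comm hg 2 0, pd_comm hg 2 1,
               pd_comm hk 1 0, pd_comm hk 2 0, pd_comm hk 2 1,
               pd_comm hh 1 0, pd_comm hh 2 0, pd_comm hh 2 1]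
    ring
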